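/- If u₁ and u₂ are plurisubharmonic functions on a domain Ω ⊂ ℂⁿ on which the complex Monge–Ampère operator is well defined, and (dd^c u₁)ⁿ ≥ F(u₁,·)dμ and (dd^c u₂)ⁿ ≥ F(u₂,·)dμ for a measure μ and a function F(t,z) nondecreasing in t, then (dd^c max(u₁,u₂))ⁿ ≥ F(max(u₁,u₂),·)dμ; that is, the set of subsolutions is stable under taking maxima. -/
import Mathlib


open MeasureTheory

/-- stability of subsolutions under taking maxima, via Demailly's inequality.
`E` is the Cegrell class `ℰ(Ω)` on which the complex Monge–Ampère operator `MA = (dd^c ·)^n`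
is well defined. -/
theorem stmt_0 {X : Type*} [MeasurableSpace X]
    (E : Set (X → ℝ)) (MA : (X → ℝ) → Measure X)
    (μ : Measure X) (F : ℝ → X → ℝ)
    (hFnonneg : ∀ t z, 0 ≤ F t z)
    (hFmono : ∀ z : X, Monotone fun t => F t z)
    (u₁ u₂ : X → ℝ) (hu₁ : u₁ ∈ E) (hu₂ : u₂ ∈ E)
    (hmax : (fun z => max (u₁ z) (u₂ z)) ∈ E)
    (hsub₁ : μ.withDensity (fun z => ENNReal.ofReal (F (u₁ z) z)) ≤ MA u₁)
    (hsub₂ : μ.withDensity (fun z => ENNReal.ofReal (F (u₂ z) z)) ≤ MA u₂)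
    (hmeas : MeasurableSet {z | u₁ z < u₂ z})
    -- Demailly's inequality for functions in the Cegrell class
    (hDem : ∀ A : Set X, MeasurableSet A →
      MA u₁ (A ∩ {z | u₂ z ≤ u₁ z}) + MA u₂ (A ∩ {z | u₁ z < u₂ z}) ≤
        MA (fun z => max (u₁ z) (u₂ z)) A) :
    μ.withDensity (fun z => ENNReal.ofReal (F (max (u₁ z) (u₂ z)) z)) ≤
      MA fun z => max (u₁ z) (u₂ z) := by
  refine Measure.le_iff.mpr (fun A hA => ?_)
  have hge : MeasurableSet {z | u₂ z ≤ u₁ z} := by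
    have : {z | u₂ z ≤ u₁ z} = {z | u₁ z < u₂ z}ᶜ := by
      ext z; simp [not_lt]
    rw [this]; exact hmeas.compl
  set s₁ := A ∩ {z | u₂ z ≤ u₁ z} with hs₁
  set s₂ := A ∩ {z | u₁ z < u₂ z} with hs₂
  have hms₁ : MeasurableSet s₁ := hA.inter hge
  have hms₂ : MeasurableSet s₂ := hA.inter hmeas
  have hAeq : A = s₁ ∪ s₂ := by
    rw [hs₁, hs₂, ← Set.inter_union_distrib_left]
    have : {z | u₂ z ≤ u₁ z} ∪ {z | u₁ z < u₂ z} = Set.univ := by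
      ext z; simp [le_or_gt]
    rw [this, Set.inter_univ]
  have hdisj : Disjoint s₁ s₂ := by
    refine Set.disjoint_left.mpr fun z hz1 hz2 => ?_
    have h1 : u₂ z ≤ u₁ z := hz1.2
    have h2 : u₁ z < u₂ z := hz2.2
    exact absurd h2 (not_lt.mpr h1)
  set g := fun z => ENNReal.ofReal (F (max (u₁ z) (u₂ z)) z) with hg
  have hsplit : μ.withDensity g A = μ.withDensity g s₁ + μ.withDensity g s₂ := by
    rw [hAeq, measure_union hdisj hms₂]
  have h₁ : μ.withDensity g s₁ ≤ MA u₁ s₁ := by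
    have heq : ∫⁻ z in s₁, g z ∂μ = ∫⁻ z in s₁, ENNReal.ofReal (F (u₁ z) z) ∂μ := by
      refine lintegral_congr_ae ?_
      filter_upwards [ae_restrict_mem hms₁] with z hz
      have : max (u₁ z) (u₂ z) = u₁ z := max_eq_left hz.2
      rw [hg]; simp only [this]
    calc μ.withDensity g s₁ = ∫⁻ z in s₁, g z ∂μ := withDensity_apply _ hms₁
      _ = ∫⁻ z in s₁, ENNReal.ofReal (F (u₁ z) z) ∂μ := heq
      _ = μ.withDensity (fun z => ENNReal.ofReal (F (u₁ z) z)) s₁ :=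
          (withDensity_apply _ hms₁).symm
      _ ≤ MA u₁ s₁ := hsub₁ _
  have h₂ : μ.withDensity g s₂ ≤ MA u₂ s₂ := by
    have heq : ∫⁻ z in s₂, g z ∂μ = ∫⁻ z in s₂, ENNReal.ofReal (F (u₂ z) z) ∂μ := by
      refine lintegral_congr_ae ?_
      filter_upwards [ae_restrict_mem hms₂] with z hz
      have : max (u₁ z) (u₂ z) = u₂ z := max_eq_right (le_of_lt hz.2)
      rw [hg]; simp only [this]
    calc μ.withDensity g s₂ = ∫⁻ z in s₂, g z ∂μ := withDensity_apply _ hms₂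
      _ = ∫⁻ z in s₂, ENNReal.ofReal (F (u₂ z) z) ∂μ := heq
      _ = μ.withDensity (fun z => ENNReal.ofReal (F (u₂ z) z)) s₂ :=
          (withDensity_apply _ hms₂).symm
      _ ≤ MA u₂ s₂ := hsub₂ _
  calc μ.withDensity g A = μ.withDensity g s₁ + μ.withDensity g s₂ := hsplit
    _ ≤ MA u₁ s₁ + MA u₂ s₂ := add_le_add h₁ h₂
    _ ≤ MA (fun z => max (u₁ z) (u₂ z)) A := hDem A hA
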